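/- arXiv:math/0505628 — 2 statements merged into one kernel-verified Lean document; each statement's English description precedes it below -/
import Mathlib

section
/- Let [f], [g] be two distinct proper non-empty real conics generating a pencil in one of the orbits I, Ia, II, IIa, III. Then the pair {[f],[g]} is of type N (the two conics lie on a same arc of their pencil) if and only if Φ₃₀Φ₁₂ > 0 and Φ₀₃Φ₂₁ > 0. -/
open Matrix Polynomial Set

noncomputable section

/-- Real ternary quadratic forms are represented by their symmetric 3×3 matrices. -/
abbrev RMat := Matrix (Fin 3) (Fin 3) ℝ
abbrev CMat := Matrix (Fin 3) (Fin 3) ℂ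

/-- The real projective plane. -/
abbrev RP2 := Projectivization ℝ (Fin 3 → ℝ)
/-- The complex projective plane. -/
abbrev CP2 := Projectivization ℂ (Fin 3 → ℂ)

instance : TopologicalSpace RP2 :=
  instTopologicalSpaceQuotient (s := projectivizationSetoid ℝ (Fin 3 → ℝ))

/-- Evaluation of the quadratic form with matrix `F` on the vector `v`. -/
def qeval (F : RMat) (v : Fin 3 → ℝ) : ℝ := v ⬝ᵥ F.mulVec v

/-- The geometric conic `[f = 0]`: zero locus in ℝP² of the quadratic form with matrix `F`. -/
def zeroLocus (F : RMat) : Set RP2 := {p | qeval F p.rep = 0}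

/-- The inside of a proper non-empty conic: the set of points where the form takes the sign of
its discriminant `det F`. -/
def insideSet (F : RMat) : Set RP2 := {p | 0 < qeval F p.rep * F.det}

/-- The conic `[f = 0]` is non-empty. -/
def NonemptyConic (F : RMat) : Prop := ∃ v : Fin 3 → ℝ, v ≠ 0 ∧ qeval F v = 0

/-- A couple of distinct (non-proportional) proper non-empty conics, given by the symmetric
matrices of two nondegenerate quadratic forms. -/
def GoodCouple (F G : RMat) : Prop :=
  F.IsSymm ∧ G.IsSymm ∧ F.det ≠ 0 ∧ G.det ≠ 0 ∧
  (∀ c : ℝ, G ≠ c • F) ∧ NonemptyConic F ∧ NonemptyConic G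

/-- Complexification of a real quadratic form. -/
def cx (F : RMat) : CMat := F.map (fun x => (x : ℂ))

/-- The quadratic form with matrix `M`, as a polynomial in three variables. -/
def formPoly (M : CMat) : MvPolynomial (Fin 3) ℂ :=
  ∑ i : Fin 3, ∑ j : Fin 3, MvPolynomial.C (M i j) * (MvPolynomial.X i * MvPolynomial.X j)

/-- The maximal ideal of the point `q` of affine 3-space. -/
def ptIdeal (q : Fin 3 → ℂ) : Ideal (MvPolynomial (Fin 3) ℂ) :=
  Ideal.span (Set.range fun i => MvPolynomial.X i - MvPolynomial.C (q i))

/-- Intersection multiplicity of the conics of `F` and `G` at the affine point `q` of the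
chart `xᵢ = 1`: the dimension of the local ring at `q` of the intersection scheme
(cut off at order 4, which is harmless since the total intersection degree of two distinct
proper conics is 4). -/
def chartMult (F G : CMat) (i : Fin 3) (q : Fin 3 → ℂ) : ℕ :=
  Module.finrank ℂ (MvPolynomial (Fin 3) ℂ ⧸
    (Ideal.span {formPoly F, formPoly G, MvPolynomial.X i - 1} ⊔ (ptIdeal q) ^ 4))

open scoped Classical in
/-- Intersection multiplicity of the conics of `F` and `G` at the point `p ∈ ℂP²`. -/
def interMult (F G : CMat) (p : CP2) : ℕ :=
  Finset.univ.sup fun i : Fin 3 =>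
    if p.rep i = 0 then 0 else chartMult F G i ((p.rep i)⁻¹ • p.rep)

/-- A point of ℂP² is real if it admits a real representative. -/
def IsRealPt (p : CP2) : Prop := ∀ i j, (p.rep i * (starRingEnd ℂ) (p.rep j)).im = 0

/-- Number of real intersection points of given multiplicity `m`. -/
def realMultCount (F G : CMat) (m : ℕ) : ℕ :=
  {p : CP2 | interMult F G p = m ∧ IsRealPt p}.ncard

/-- Number of imaginary (non-real) intersection points of given multiplicity `m`;
these come in complex-conjugate pairs. -/
def imagMultCount (F G : CMat) (m : ℕ) : ℕ :=
  {p : CP2 | interMult F G p = m ∧ ¬ IsRealPt p}.ncard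

/-- A continuous path (on `[0,1]`) in the space of couples of distinct proper conics along
which the numbers of real and of imaginary intersection points of each multiplicity stay
constant. -/
def RigidPath (F G : ℝ → RMat) : Prop :=
  ContinuousOn F (Icc 0 1) ∧ ContinuousOn G (Icc 0 1) ∧
  (∀ t ∈ Icc (0:ℝ) 1, (F t).IsSymm ∧ (G t).IsSymm ∧ (F t).det ≠ 0 ∧ (G t).det ≠ 0 ∧
     ∀ c : ℝ, G t ≠ c • F t) ∧
  (∀ t ∈ Icc (0:ℝ) 1, ∀ m : ℕ, 0 < m →
     realMultCount (cx (F t)) (cx (G t)) m = realMultCount (cx (F 0)) (cx (G 0)) m ∧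
     imagMultCount (cx (F t)) (cx (G t)) m = imagMultCount (cx (F 0)) (cx (G 0)) m)

/-- Two matrices define the same algebraic conic. -/
def ProjEq (M N : RMat) : Prop := ∃ c : ℝ, c ≠ 0 ∧ M = c • N

/-- Rigid isotopy of couples of (algebraic) conics. -/
def RigidlyIsotopic (F₁ G₁ F₂ G₂ : RMat) : Prop :=
  ∃ F G : ℝ → RMat, RigidPath F G ∧
    ProjEq (F 0) F₁ ∧ ProjEq (G 0) G₁ ∧ ProjEq (F 1) F₂ ∧ ProjEq (G 1) G₂

/-- Equivalence of pairs: rigid isotopy together with possible exchange of the two conics. -/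
def PairEquiv (F₁ G₁ F₂ G₂ : RMat) : Prop :=
  RigidlyIsotopic F₁ G₁ F₂ G₂ ∨ RigidlyIsotopic F₁ G₁ G₂ F₂

/-- An isotopy of ℝP² (parametrized by `[0,1]`): jointly continuous, each time-`t` map a
homeomorphism, starting from the identity. -/
def IsIsotopy (θ : ℝ → RP2 → RP2) : Prop :=
  ContinuousOn (fun q : ℝ × RP2 => θ q.1 q.2) (Icc (0:ℝ) 1 ×ˢ univ) ∧
  θ 0 = id ∧
  ∀ t ∈ Icc (0:ℝ) 1, ∃ h : RP2 ≃ₜ RP2, θ t = h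

/-- Two couples of subsets of ℝP² are ambient isotopic. -/
def AmbientIsotopic (N₁ N₁' N₂ N₂' : Set RP2) : Prop :=
  ∃ θ : ℝ → RP2 → RP2, IsIsotopy θ ∧ ∃ t ∈ Icc (0:ℝ) 1, θ t '' N₁ = N₂ ∧ θ t '' N₁' = N₂'

/-- Ambient isotopy of couples of conics. -/
def CoupleAmbEquiv (F₁ G₁ F₂ G₂ : RMat) : Prop :=
  AmbientIsotopic (zeroLocus F₁) (zeroLocus G₁) (zeroLocus F₂) (zeroLocus G₂)

/-- Action of a linear change of coordinates on quadratic forms: `f ∘ A` has matrix `Aᵀ F A`. -/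
def transform (A : RMat) (M : RMat) : RMat := Aᵀ * M * A

/-- The pencil spanned by `[F], [G]` is the image, under a projective linear transformation,
of the pencil spanned by `[F₀], [G₀]`. -/
def PencilEquivTo (F G F₀ G₀ : RMat) : Prop :=
  ∃ A : GL (Fin 3) ℝ,
    Submodule.span ℝ ({transform (↑A) F₀, transform (↑A) G₀} : Set RMat) =
    Submodule.span ℝ ({F, G} : Set RMat)

/-- The two conics `[F]`, `[G]` lie on a same arc of the pencil they span: they can be joined
by a path inside the set of proper conics of this pencil. -/
def SameArc (F G : RMat) : Prop :=
  ∃ a b : ℝ → ℝ, ContinuousOn a (Icc 0 1) ∧ ContinuousOn b (Icc 0 1) ∧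
    (∀ t ∈ Icc (0:ℝ) 1, (a t • F + b t • G).det ≠ 0) ∧
    ProjEq (a 0 • F + b 0 • G) F ∧ ProjEq (a 1 • F + b 1 • G) G

/-- The conic `[F = 0]` lies inside the conic `[G = 0]` (except at the common points). -/
def InsideRel (F G : RMat) : Prop :=
  ∀ p ∈ zeroLocus F, p ∉ zeroLocus G → p ∈ insideSet G

/-- `p` is a point of tangency of the two conics: a common point where the tangent lines
(gradients) coincide. -/
def TangencyPt (F G : RMat) (p : RP2) : Prop :=
  p ∈ zeroLocus F ∧ p ∈ zeroLocus G ∧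
  ∃ c : ℝ, F.mulVec p.rep = c • G.mulVec p.rep ∨ G.mulVec p.rep = c • F.mulVec p.rep

/-- The conic `[F = 0]` lies inside `[G = 0]` in a punctured neighborhood of the double
intersection point. -/
def InsideNearTangency (F G : RMat) : Prop :=
  ∃ p : RP2, TangencyPt F G p ∧
    ∃ U ∈ nhds p, ∀ q ∈ U, q ≠ p → q ∈ zeroLocus F → q ∈ insideSet G

/-- The matrix of the pencil `t f + g`, over the polynomial ring ℝ[t]. -/
def pencilPolyMat (F G : RMat) : Matrix (Fin 3) (Fin 3) (Polynomial ℝ) :=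
  Matrix.of fun i j => Polynomial.C (F i j) * Polynomial.X + Polynomial.C (G i j)

/-- The (de-homogenized) characteristic form `φ(t) = Disc(t f + g)`. -/
def phiP (F G : RMat) : Polynomial ℝ := (pencilPolyMat F G).det

/-- The coefficients of the characteristic form: `ph F G 3 = Φ₃₀`, `ph F G 2 = Φ₂₁`,
`ph F G 1 = Φ₁₂`, `ph F G 0 = Φ₀₃`. -/
def ph (F G : RMat) (k : ℕ) : ℝ := (phiP F G).coeff k

/-- `ψ(t)`: the coefficient of `v` in `det (v·Id − M(tf+g)) = v³ − μ(t)v² + ψ(t)v − φ(t)`. -/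
def psiP (F G : RMat) : Polynomial ℝ := ((pencilPolyMat F G).charpoly).coeff 1

/-- `P`: the remainder of the euclidean division of `Φ₃₀ · ψ · φ′` by `φ`. -/
def Prem (F G : RMat) : Polynomial ℝ :=
  (Polynomial.C (ph F G 3) * psiP F G * derivative (phiP F G)) % (phiP F G)

/-- The coefficients `p₂, p₁, p₀` of `P`. -/
def pc (F G : RMat) (k : ℕ) : ℝ := (Prem F G).coeff k

/-- The principal subresultant coefficient `A₁ = sr₁(φ, P)`. -/
def A1 (F G : RMat) : ℝ :=
  Matrix.det !![ph F G 3, ph F G 2, ph F G 1;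
                0, pc F G 2, pc F G 1;
                pc F G 2, pc F G 1, pc F G 0]

/-- Resultant of a cubic and a quadratic (Sylvester determinant). -/
def syl32 (a3 a2 a1 a0 b2 b1 b0 : ℝ) : ℝ :=
  Matrix.det !![a3,a2,a1,a0,0; 0,a3,a2,a1,a0; b2,b1,b0,0,0; 0,b2,b1,b0,0; 0,0,b2,b1,b0]

/-- Resultant of a quadratic and a cubic (Sylvester determinant). -/
def syl23 (b2 b1 b0 a3 a2 a1 a0 : ℝ) : ℝ :=
  Matrix.det !![b2,b1,b0,0,0; 0,b2,b1,b0,0; 0,0,b2,b1,b0; a3,a2,a1,a0,0; 0,a3,a2,a1,a0]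

/-- `Res(φ, φ′)`. -/
def resPhiDPhi (F G : RMat) : ℝ :=
  syl32 (ph F G 3) (ph F G 2) (ph F G 1) (ph F G 0)
    ((derivative (phiP F G)).coeff 2) ((derivative (phiP F G)).coeff 1)
    ((derivative (phiP F G)).coeff 0)

/-- `Res(ψ, φ)`. -/
def resPsiPhi (F G : RMat) : ℝ :=
  syl23 ((psiP F G).coeff 2) ((psiP F G).coeff 1) ((psiP F G).coeff 0)
    (ph F G 3) (ph F G 2) (ph F G 1) (ph F G 0)

/-- `A₀ = −Res(φ, P) = sr₀(φ, P)`. -/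
def A0 (F G : RMat) : ℝ :=
  - syl32 (ph F G 3) (ph F G 2) (ph F G 1) (ph F G 0) (pc F G 2) (pc F G 1) (pc F G 0)

/-- The discriminant of the characteristic form, `Disc(Φ) = Res(φ,φ′)/(27 Φ₃₀)`. -/
def discPhi (F G : RMat) : ℝ := resPhiDPhi F G / (27 * ph F G 3)

/-- Coefficients of the Hessian determinant `H = H₂₀ t² + H₁₁ t u + H₀₂ u²` of `Φ`. -/
def H20 (F G : RMat) : ℝ := 4 * (3 * ph F G 3 * ph F G 1 - (ph F G 2)^2)
def H11 (F G : RMat) : ℝ := 4 * (9 * ph F G 3 * ph F G 0 - ph F G 2 * ph F G 1)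
def H02 (F G : RMat) : ℝ := 4 * (3 * ph F G 2 * ph F G 0 - (ph F G 1)^2)

/-- The Hessian covariant `H` of `Φ` vanishes identically. -/
def HVanishes (F G : RMat) : Prop := H20 F G = 0 ∧ H11 F G = 0 ∧ H02 F G = 0

/-- `Ω(f,g)`: the middle coefficient of the tangential form of `t f + g`, so that
`adj(tF+G) = adj(F) t² + Ω t + adj(G)`. -/
def OmegaM (F G : RMat) : RMat := (F + G).adjugate - F.adjugate - G.adjugate

/-- The coefficients, in the basis `X², Y², Z², YZ, XZ, XY` of quadratic forms on the dual
space, of the quadratic form with matrix `N`. -/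
def rowOf (N : RMat) : Fin 6 → ℝ := ![N 0 0, N 1 1, N 2 2, 2 * N 1 2, 2 * N 0 2, 2 * N 0 1]

/-- Maximal minors `[ijk]` of the 3×6 matrix `M` of the coefficients of `f̃`, `Ω`, `g̃`;
the columns `1, 2, 3, 1̄, 2̄, 3̄` are indexed `0, 1, 2, 3, 4, 5`. -/
def minorM (F G : RMat) (i j k : Fin 6) : ℝ :=
  Matrix.det !![rowOf F.adjugate i, rowOf F.adjugate j, rowOf F.adjugate k;
                rowOf (OmegaM F G) i, rowOf (OmegaM F G) j, rowOf (OmegaM F G) k;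
                rowOf G.adjugate i, rowOf G.adjugate j, rowOf G.adjugate k]

/-- The ten coefficients (in `x³, y³, z³, xy², xz², x²y, yz², x²z, y²z, xyz`) of the
autopolar triangle covariant `G` of `(f,g)`. -/
def Gcovar (F G : RMat) : Fin 10 → ℝ :=
  ![- minorM F G 3 1 2,
    - minorM F G 0 4 2,
    - minorM F G 0 1 5,
    minorM F G 0 3 2 + 2 * minorM F G 5 4 2,
    minorM F G 0 1 3 + 2 * minorM F G 4 1 5,
    minorM F G 4 1 2 + 2 * minorM F G 3 5 2,
    minorM F G 0 1 4 + 2 * minorM F G 0 3 5,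
    minorM F G 5 1 2 + 2 * minorM F G 3 1 4,
    minorM F G 0 5 2 + 2 * minorM F G 0 4 3,
    minorM F G 0 1 2 + 4 * minorM F G 3 4 5]

/-- The autopolar triangle covariant `G` vanishes identically. -/
def GVanishes (F G : RMat) : Prop := ∀ k, Gcovar F G k = 0

/-- The antisymmetric invariant `𝒜 = Φ₃₀Φ₁₂³ − Φ₀₃Φ₂₁³`. -/
def antisymInv (F G : RMat) : ℝ := ph F G 3 * (ph F G 1)^3 - ph F G 0 * (ph F G 2)^3

/-- Coefficients of `Q = Remainder(P·φ″, φ)`: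
`q₂ = 3p₁Φ₃₀ − 2p₂Φ₂₁`, `q₁ = 3p₀Φ₃₀ + p₁Φ₂₁ − 3p₂Φ₁₂`, `q₀ = p₀Φ₂₁ − 3p₂Φ₀₃`. -/
def qc2 (F G : RMat) : ℝ := 3 * pc F G 1 * ph F G 3 - 2 * pc F G 2 * ph F G 2
def qc1 (F G : RMat) : ℝ :=
  3 * pc F G 0 * ph F G 3 + pc F G 1 * ph F G 2 - 3 * pc F G 2 * ph F G 1
def qc0 (F G : RMat) : ℝ := pc F G 0 * ph F G 2 - 3 * pc F G 2 * ph F G 0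

/-- The subresultant coefficient `B₁ = sr₁(φ, Q)`. -/
def B1 (F G : RMat) : ℝ :=
  Matrix.det !![ph F G 3, ph F G 2, ph F G 1;
                0, qc2 F G, qc1 F G;
                qc2 F G, qc1 F G, qc0 F G]

/-- `R = 27Φ₃₀²Φ₀₃ + 2Φ₂₁³ − 6Φ₃₀Φ₂₁Φ₁₂ = Res(φ″,φ)/(8Φ₃₀)`. -/
def Rq (F G : RMat) : ℝ :=
  27 * (ph F G 3)^2 * ph F G 0 + 2 * (ph F G 2)^3 - 6 * ph F G 3 * ph F G 2 * ph F G 1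

/- Levy's representatives of the nine `PGL(3,ℝ)`-orbits of non-degenerate pencils of conics:
orbit I: (x²−y², x²−z²); Ia: (x²+y²+z², xz); Ib: (x²+y²−z², xz); II: (yz, x(y−z));
IIa: (y²+z², xz); III: (xz, y²); IIIa: (x²+y², z²); IV: (xz−y², xy); V: (xz−y², x²). -/
def mXZ : RMat := !![0,0,1/2;0,0,0;1/2,0,0]
def levyI_f : RMat := !![1,0,0;0,-1,0;0,0,0]
def levyI_g : RMat := !![1,0,0;0,0,0;0,0,-1]
def levyIa_f : RMat := 1
def levyIa_g : RMat := mXZ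
def levyIb_f : RMat := !![1,0,0;0,1,0;0,0,-1]
def levyIb_g : RMat := mXZ
def levyII_f : RMat := !![0,0,0;0,0,1/2;0,1/2,0]
def levyII_g : RMat := !![0,1/2,-1/2;1/2,0,0;-1/2,0,0]
def levyIIa_f : RMat := !![0,0,0;0,1,0;0,0,1]
def levyIIa_g : RMat := mXZ
def levyIII_f : RMat := mXZ
def levyIII_g : RMat := !![0,0,0;0,1,0;0,0,0]
def levyIIIa_f : RMat := !![1,0,0;0,1,0;0,0,0]
def levyIIIa_g : RMat := !![0,0,0;0,0,0;0,0,1]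
def levyIV_f : RMat := !![0,0,1/2;0,-1,0;1/2,0,0]
def levyIV_g : RMat := !![0,1/2,0;1/2,0,0;0,0,0]
def levyV_f : RMat := !![0,0,1/2;0,-1,0;1/2,0,0]
def levyV_g : RMat := !![1,0,0;0,0,0;0,0,0]

/-!
The discriminant `det (a • F + b • G)` is the binary cubic form `Φ(a, b)`. For the orbits
I, Ia, II, IIa and III, `Φ` is a product of real linear forms `eᵢ a + fᵢ b`. None of them
vanishes along a path of proper conics of the pencil from `[F]` to `[G]`, so each takes the same
sign at both ends: all the products `eᵢ fᵢ` have one common sign, and expanding `Φ₃₀ Φ₁₂` and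
`Φ₀₃ Φ₂₁` in the `eᵢ, fᵢ` gives sums of positive terms. Conversely, under the two sign
conditions every coefficient of `Φ₃₀ Φ(1 - t, ± t)` is positive for a suitable sign `±`, so the
segment from `F` to `± G` stays among proper conics.
-/

lemma pencilPolyMat_eq (F G : RMat) :
    pencilPolyMat F G = (X : ℝ[X]) • F.map C + G.map C := by
  refine Matrix.ext fun i j => ?_
  simp only [pencilPolyMat, of_apply, Matrix.add_apply, Matrix.smul_apply, map_apply,
    smul_eq_mul]
  ring

lemma ph_three (F G : RMat) : ph F G 3 = F.det := by
  simpa [ph, phiP, pencilPolyMat_eq] using coeff_det_X_add_C_card F G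

lemma det_smul_add (F G : RMat) (t : ℝ) :
    (t • F + G).det = ph F G 3 * t ^ 3 + ph F G 2 * t ^ 2 + ph F G 1 * t + ph F G 0 := by
  have hmap : t • F + G = (pencilPolyMat F G).map (evalRingHom t) := by
    ext i j
    simp only [Matrix.add_apply, Matrix.smul_apply, smul_eq_mul, pencilPolyMat, coe_evalRingHom,
      map_apply, of_apply, eval_add, eval_mul, eval_C, eval_X]
    ring
  have hdeg : (phiP F G).natDegree < 4 := by
    have := natDegree_det_X_add_C_le F G
    rw [← pencilPolyMat_eq, Fintype.card_fin] at this
    exact Nat.lt_succ_of_le this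
  rw [hmap, ← RingHom.mapMatrix_apply, ← RingHom.map_det, ← phiP, coe_evalRingHom,
    eval_eq_sum_range' hdeg]
  simp only [Finset.sum_range_succ, Finset.sum_range_zero, ph]
  ring

lemma det_smul_add_smul (F G : RMat) (a b : ℝ) :
    (a • F + b • G).det =
      ph F G 3 * a ^ 3 + ph F G 2 * a ^ 2 * b + ph F G 1 * a * b ^ 2 + ph F G 0 * b ^ 3 := by
  rcases eq_or_ne b 0 with rfl | hb
  · simp [ph_three, mul_comm]
  · have hpencil : a • F + b • G = b • ((a / b) • F + G) := by
      rw [smul_add, smul_smul, mul_div_cancel₀ a hb]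
    rw [hpencil, det_smul, det_smul_add, Fintype.card_fin]
    field_simp

lemma binary_cubic_pos {c₃ c₂ c₁ c₀ x y : ℝ} (h₃ : 0 < c₃) (h₂ : 0 ≤ c₂) (h₁ : 0 ≤ c₁)
    (h₀ : 0 < c₀) (hx : 0 ≤ x) (hy : 0 ≤ y) (hxy : 0 < x + y) :
    0 < c₃ * x ^ 3 + c₂ * x ^ 2 * y + c₁ * x * y ^ 2 + c₀ * y ^ 3 := by
  have hends : 0 < c₃ * x ^ 3 + c₀ * y ^ 3 := by
    rcases hx.eq_or_lt with rfl | hx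
    · simpa using mul_pos h₀ (pow_pos (by linarith : 0 < y) 3)
    · exact add_pos_of_pos_of_nonneg (by positivity) (by positivity)
  have hmixed : 0 ≤ c₂ * x ^ 2 * y + c₁ * x * y ^ 2 := by positivity
  linarith

theorem sameArc_of_ph_mul_pos {F G : RMat} (h₃₁ : 0 < ph F G 3 * ph F G 1)
    (h₀₂ : 0 < ph F G 0 * ph F G 2) : SameArc F G := by
  obtain ⟨σ, hσ, hσpos⟩ : ∃ σ : ℝ, σ ^ 2 = 1 ∧ 0 < σ * (ph F G 3 * ph F G 0) := by
    rcases (mul_ne_zero (left_ne_zero_of_mul h₃₁.ne') (left_ne_zero_of_mul h₀₂.ne')).lt_or_gt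
      with hneg | hpos
    · exact ⟨-1, by norm_num, by linarith⟩
    · exact ⟨1, by norm_num, by linarith⟩
  have hσ₂ : 0 < σ * ph F G 3 * ph F G 2 := by
    have := mul_pos hσpos h₀₂
    nlinarith [sq_nonneg (ph F G 0)]
  have h₃ : 0 < ph F G 3 ^ 2 := by
    have := left_ne_zero_of_mul h₃₁.ne'
    positivity
  refine ⟨fun t => 1 - t, fun t => σ * t, by fun_prop, by fun_prop, fun t ht => ?_,
    ⟨1, one_ne_zero, by simp⟩, ⟨σ, by rintro rfl; simp at hσ, by simp⟩⟩
  -- `Φ₃₀ Φ(1 - t, σ t)` is a cubic in `(1 - t, t)` with positive coefficients.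
  have hcubic : ph F G 3 * ((1 - t) • F + (σ * t) • G).det =
      ph F G 3 ^ 2 * (1 - t) ^ 3 + σ * ph F G 3 * ph F G 2 * (1 - t) ^ 2 * t +
      ph F G 3 * ph F G 1 * (1 - t) * t ^ 2 + σ * (ph F G 3 * ph F G 0) * t ^ 3 := by
    rw [det_smul_add_smul]
    linear_combination (ph F G 3 * ph F G 1 * (1 - t) * t ^ 2 +
      σ * ph F G 3 * ph F G 0 * t ^ 3) * hσ
  have hpos := binary_cubic_pos h₃ hσ₂.le h₃₁.le hσpos (sub_nonneg.2 ht.2) ht.1 (by linarith)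
  rw [← hcubic] at hpos
  exact right_ne_zero_of_mul hpos.ne'

def PencilDetSplits (F G : RMat) : Prop :=
  ∃ (c : ℝ) (e f : Fin 3 → ℝ), ∀ a b : ℝ, (a • F + b • G).det = c * ∏ i, (e i * a + f i * b)

lemma PencilDetSplits.transform {F G : RMat} (A : RMat) (h : PencilDetSplits F G) :
    PencilDetSplits (_root_.transform A F) (_root_.transform A G) := by
  obtain ⟨c, e, f, hdet⟩ := h
  refine ⟨A.det ^ 2 * c, e, f, fun a b => ?_⟩
  have hpencil : a • _root_.transform A F + b • _root_.transform A G =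
      _root_.transform A (a • F + b • G) := by
    simp only [_root_.transform, Matrix.mul_add, Matrix.add_mul, Matrix.mul_smul, Matrix.smul_mul]
  rw [hpencil, _root_.transform, det_mul, det_mul, det_transpose, hdet]
  ring

lemma PencilDetSplits.of_mem_span {F₀ G₀ F G : RMat} (h : PencilDetSplits F₀ G₀)
    (hF : F ∈ Submodule.span ℝ {F₀, G₀}) (hG : G ∈ Submodule.span ℝ {F₀, G₀}) :
    PencilDetSplits F G := by
  obtain ⟨c, e, f, hdet⟩ := h
  obtain ⟨α, β, rfl⟩ := Submodule.mem_span_pair.mp hF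
  obtain ⟨γ, δ, rfl⟩ := Submodule.mem_span_pair.mp hG
  refine ⟨c, fun i => e i * α + f i * β, fun i => e i * γ + f i * δ, fun a b => ?_⟩
  have hpencil : a • (α • F₀ + β • G₀) + b • (γ • F₀ + δ • G₀) =
      (a * α + b * γ) • F₀ + (a * β + b * δ) • G₀ := by
    module
  rw [hpencil, hdet]
  congr 1
  exact Finset.prod_congr rfl fun i _ => by ring

lemma PencilEquivTo.pencilDetSplits {F G F₀ G₀ : RMat} (h : PencilEquivTo F G F₀ G₀)
    (h₀ : PencilDetSplits F₀ G₀) : PencilDetSplits F G := by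
  obtain ⟨A, hspan⟩ := h
  exact (h₀.transform A).of_mem_span (hspan ▸ Submodule.subset_span (by simp))
    (hspan ▸ Submodule.subset_span (by simp))

lemma pencilDetSplits_levyI : PencilDetSplits levyI_f levyI_g :=
  ⟨1, ![1, 1, 0], ![1, 0, 1], fun a b => by
    simp [det_fin_three, levyI_f, levyI_g, Fin.prod_univ_three]⟩

lemma pencilDetSplits_levyIa : PencilDetSplits levyIa_f levyIa_g :=
  ⟨1, ![1, 1, 1], ![0, -1/2, 1/2], fun a b => by
    simp [det_fin_three, levyIa_f, levyIa_g, mXZ, Fin.prod_univ_three, one_apply]; ring⟩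

lemma pencilDetSplits_levyII : PencilDetSplits levyII_f levyII_g :=
  ⟨-1/4, ![1, 0, 0], ![0, 1, 1], fun a b => by
    simp [det_fin_three, levyII_f, levyII_g, Fin.prod_univ_three]; ring⟩

lemma pencilDetSplits_levyIIa : PencilDetSplits levyIIa_f levyIIa_g :=
  ⟨-1/4, ![1, 0, 0], ![0, 1, 1], fun a b => by
    simp [det_fin_three, levyIIa_f, levyIIa_g, mXZ, Fin.prod_univ_three]; ring⟩

lemma pencilDetSplits_levyIII : PencilDetSplits levyIII_f levyIII_g :=
  ⟨-1/4, ![1, 1, 0], ![0, 0, 1], fun a b => by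
    simp [det_fin_three, levyIII_f, levyIII_g, mXZ, Fin.prod_univ_three]; ring⟩

lemma mul_pos_of_continuousOn_of_ne_zero {g : ℝ → ℝ} {a b : ℝ} (hab : a ≤ b)
    (hg : ContinuousOn g (Icc a b)) (hne : ∀ t ∈ Icc a b, g t ≠ 0) : 0 < g a * g b := by
  by_contra! hle
  rw [← uIcc_of_le hab] at hg hne
  obtain ⟨t, ht, hgt⟩ : (0 : ℝ) ∈ g '' uIcc a b := by
    refine intermediate_value_uIcc hg (mem_uIcc.2 ?_)
    rcases mul_nonpos_iff.1 hle with h | h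
    exacts [Or.inr ⟨h.2, h.1⟩, Or.inl h]
  exact hne t ht hgt

lemma SameArc.exists_path_of_linearIndependent {F G : RMat}
    (hli : LinearIndependent ℝ ![F, G]) (h : SameArc F G) :
    ∃ a b : ℝ → ℝ, ContinuousOn a (Icc 0 1) ∧ ContinuousOn b (Icc 0 1) ∧
      (∀ t ∈ Icc (0:ℝ) 1, (a t • F + b t • G).det ≠ 0) ∧ b 0 = 0 ∧ a 1 = 0 := by
  obtain ⟨a, b, ha, hb, hdet, ⟨c₀, -, h₀⟩, ⟨c₁, -, h₁⟩⟩ := h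
  refine ⟨a, b, ha, hb, hdet, (LinearIndependent.pair_iff.1 hli (a 0 - c₀) (b 0) ?_).2,
    (LinearIndependent.pair_iff.1 hli (a 1) (b 1 - c₁) ?_).1⟩
  · rw [sub_smul, sub_add_eq_add_sub, h₀, sub_self]
  · rw [sub_smul, ← add_sub_assoc, h₁, sub_self]

lemma prod_coeff_three_mul_coeff_one_pos {s : ℝ} {e f : Fin 3 → ℝ} (h : ∀ i, 0 < e i * f i * s) :
    0 < e 0 * e 1 * e 2 * (e 0 * f 1 * f 2 + f 0 * e 1 * f 2 + f 0 * f 1 * e 2) := by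
  have hpair : ∀ i j, 0 < e i * f i * (e j * f j) := fun i j =>
    pos_of_mul_pos_left (by linarith [mul_pos (h i) (h j)] : 0 < _ * s ^ 2) (sq_nonneg s)
  have he : ∀ i, 0 < e i ^ 2 := fun i => by
    have := left_ne_zero_of_mul (left_ne_zero_of_mul (h i).ne')
    positivity
  calc 0 < e 0 ^ 2 * (e 1 * f 1 * (e 2 * f 2)) + e 1 ^ 2 * (e 0 * f 0 * (e 2 * f 2)) +
        e 2 ^ 2 * (e 0 * f 0 * (e 1 * f 1)) := by
        have := mul_pos (he 0) (hpair 1 2)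
        have := mul_pos (he 1) (hpair 0 2)
        have := mul_pos (he 2) (hpair 0 1)
        linarith
    _ = _ := by ring

lemma coeff_mul_pos_of_eq_prod {p₃ p₂ p₁ p₀ c s : ℝ} {e f : Fin 3 → ℝ} (hc : c ≠ 0)
    (hsign : ∀ i, 0 < e i * f i * s)
    (hprod : ∀ x y : ℝ, p₃ * x ^ 3 + p₂ * x ^ 2 * y + p₁ * x * y ^ 2 + p₀ * y ^ 3 =
      c * ∏ i, (e i * x + f i * y)) :
    0 < p₃ * p₁ ∧ 0 < p₀ * p₂ := by
  simp only [Fin.prod_univ_three] at hprod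
  have hp₃ : p₃ = c * (e 0 * e 1 * e 2) := by linear_combination hprod 1 0
  have hp₀ : p₀ = c * (f 0 * f 1 * f 2) := by linear_combination hprod 0 1
  have hp₁ : p₁ = c * (e 0 * f 1 * f 2 + f 0 * e 1 * f 2 + f 0 * f 1 * e 2) := by
    linear_combination (1/2) * hprod 1 1 + (1/2) * hprod 1 (-1) - hprod 1 0
  have hp₂ : p₂ = c * (f 0 * e 1 * e 2 + e 0 * f 1 * e 2 + e 0 * e 1 * f 2) := by
    linear_combination (1/2) * hprod 1 1 - (1/2) * hprod 1 (-1) - hprod 0 1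
  have hc₂ : 0 < c ^ 2 := by positivity
  constructor
  · calc 0 < c ^ 2 * (e 0 * e 1 * e 2 * (e 0 * f 1 * f 2 + f 0 * e 1 * f 2 + f 0 * f 1 * e 2)) :=
          mul_pos hc₂ (prod_coeff_three_mul_coeff_one_pos hsign)
      _ = p₃ * p₁ := by rw [hp₃, hp₁]; ring
  · calc 0 < c ^ 2 * (f 0 * f 1 * f 2 * (f 0 * e 1 * e 2 + e 0 * f 1 * e 2 + e 0 * e 1 * f 2)) :=
          mul_pos hc₂ (prod_coeff_three_mul_coeff_one_pos fun i => mul_comm (e i) (f i) ▸ hsign i)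
      _ = p₀ * p₂ := by rw [hp₀, hp₂]; ring

theorem ph_mul_pos_of_sameArc {F G : RMat} (hli : LinearIndependent ℝ ![F, G])
    (hsplit : PencilDetSplits F G) (h : SameArc F G) :
    0 < ph F G 3 * ph F G 1 ∧ 0 < ph F G 0 * ph F G 2 := by
  obtain ⟨c, e, f, hdet⟩ := hsplit
  obtain ⟨a, b, ha, hb, hne, hb₀, ha₁⟩ := h.exists_path_of_linearIndependent hli
  have hne' : ∀ t ∈ Icc (0:ℝ) 1, c * ∏ i, (e i * a t + f i * b t) ≠ 0 :=
    fun t ht => hdet (a t) (b t) ▸ hne t ht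
  have hc : c ≠ 0 := left_ne_zero_of_mul (hne' 0 ⟨le_rfl, zero_le_one⟩)
  -- No linear factor vanishes along the path, so each has the same sign at both ends.
  have hsign : ∀ i, 0 < e i * f i * (a 0 * b 1) := fun i => by
    have := mul_pos_of_continuousOn_of_ne_zero zero_le_one (by fun_prop)
      fun t ht => Finset.prod_ne_zero_iff.1 (right_ne_zero_of_mul (hne' t ht)) i
        (Finset.mem_univ i)
    rw [hb₀, ha₁] at this
    linarith
  exact coeff_mul_pos_of_eq_prod hc hsign fun x y => by rw [← det_smul_add_smul, hdet]

/-- **Proposition.** Two distinct proper non-empty conics generating a pencil in one of the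
orbits I, Ia, II, IIa, III are on a same arc of their pencil (type N) if and only if
`Φ₃₀Φ₁₂ > 0` and `Φ₀₃Φ₂₁ > 0`. -/
theorem typeN_characterization (F G : RMat) (h : GoodCouple F G)
    (horb : PencilEquivTo F G levyI_f levyI_g ∨ PencilEquivTo F G levyIa_f levyIa_g ∨
      PencilEquivTo F G levyII_f levyII_g ∨ PencilEquivTo F G levyIIa_f levyIIa_g ∨
      PencilEquivTo F G levyIII_f levyIII_g) :
    SameArc F G ↔ (0 < ph F G 3 * ph F G 1 ∧ 0 < ph F G 0 * ph F G 2) := by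
  obtain ⟨-, -, hF, -, hind, -, -⟩ := h
  have hli : LinearIndependent ℝ ![F, G] :=
    (LinearIndependent.pair_iff' fun hF0 => hF (by simp [hF0])).2 fun c hc => hind c hc.symm
  have hsplit : PencilDetSplits F G := by
    rcases horb with h | h | h | h | h
    exacts [h.pencilDetSplits pencilDetSplits_levyI, h.pencilDetSplits pencilDetSplits_levyIa,
      h.pencilDetSplits pencilDetSplits_levyII, h.pencilDetSplits pencilDetSplits_levyIIa,
      h.pencilDetSplits pencilDetSplits_levyIII]
  exact ⟨ph_mul_pos_of_sameArc hli hsplit, fun h => sameArc_of_ph_mul_pos h.1 h.2⟩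
end
end

section
/- Let f, g be nondegenerate real ternary quadratic forms with non-empty zero loci, generating a pencil in orbit V. Then the conic [f=0] lies inside the conic [g=0] if and only if T < 0, where T = Φ₁₂·tr(M(f)) − Φ₂₁·tr(M(g)) is the trace of the antisymmetric covariant ℬ(f,g) = Φ₁₂ f − Φ₂₁ g. -/
open Matrix Polynomial Set

noncomputable section

section AuxOrbitV

lemma pencil_smul' (F G : RMat) :
    pencilPolyMat F G = (X : ℝ[X]) • F.map (C : ℝ →+* ℝ[X]) + G.map C := by
  ext i j
  simp only [pencilPolyMat, Matrix.of_apply, Matrix.add_apply, Matrix.smul_apply,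
    Matrix.map_apply, smul_eq_mul]
  ring

lemma pencil_transform' (A F G : RMat) :
    pencilPolyMat (transform A F) (transform A G)
      = (A.map (C : ℝ →+* ℝ[X]))ᵀ * pencilPolyMat F G * (A.map C) := by
  rw [pencil_smul', pencil_smul']
  simp only [transform, Matrix.map_mul, Matrix.transpose_map]
  rw [Matrix.mul_add, Matrix.add_mul, Matrix.mul_smul, Matrix.smul_mul]

lemma phiP_transform' (A F G : RMat) :
    phiP (transform A F) (transform A G) = C (A.det ^ 2) * phiP F G := by
  rw [phiP, pencil_transform', Matrix.det_mul, Matrix.det_mul, Matrix.det_transpose]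
  rw [← RingHom.mapMatrix_apply, ← RingHom.map_det]
  rw [phiP, map_pow]
  ring

lemma phiP_model' (a b c d : ℝ) :
    phiP (a • levyV_f + b • levyV_g) (c • levyV_f + d • levyV_g)
      = C (a*(a/2)^2) * X^3 + C (3*c*(a/2)^2) * X^2 + C (3*a*(c/2)^2) * X + C (c*(c/2)^2) := by
  simp only [phiP, pencilPolyMat, Matrix.det_fin_three, Matrix.of_apply, Matrix.add_apply,
    Matrix.smul_apply, levyV_f, levyV_g, Matrix.cons_val', Matrix.cons_val_zero,
    Matrix.cons_val_one, Matrix.head_cons, Matrix.empty_val', Matrix.cons_val_fin_one,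
    Matrix.head_fin_const, Matrix.cons_val_two, Matrix.tail_cons, smul_eq_mul]
  simp only [div_eq_mul_inv, _root_.map_mul, _root_.map_add, map_neg, map_pow,
    _root_.map_one, _root_.map_zero, map_ofNat]
  ring

lemma qeval_transform' (A f : RMat) (v : Fin 3 → ℝ) :
    qeval (transform A f) v = qeval f (A.mulVec v) := by
  simp only [qeval, transform, ← Matrix.mulVec_mulVec, Matrix.dotProduct_mulVec,
    Matrix.vecMul_transpose]

lemma qeval_model' (a b : ℝ) (w : Fin 3 → ℝ) :
    qeval (a • levyV_f + b • levyV_g) w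
      = b * w 0 ^ 2 + a * (w 0 * w 2 - w 1 ^ 2) := by
  simp [qeval, Matrix.mulVec, dotProduct, levyV_f, levyV_g, Fin.sum_univ_three,
    Matrix.vecHead, Matrix.vecTail]
  ring

lemma qeval_smul' (F : RMat) (r : ℝ) (v : Fin 3 → ℝ) :
    qeval F (r • v) = r ^ 2 * qeval F v := by
  simp [qeval, Matrix.mulVec_smul, dotProduct_smul, smul_dotProduct,
    smul_eq_mul]
  ring

lemma det_transform' (A f : RMat) : (transform A f).det = A.det ^ 2 * f.det := by
  simp [transform, Matrix.det_mul, Matrix.det_transpose]; ring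

lemma det_model' (a b : ℝ) : (a • levyV_f + b • levyV_g).det = a ^ 3 / 4 := by
  simp [Matrix.det_fin_three, levyV_f, levyV_g, Matrix.smul_apply, Matrix.add_apply,
    Matrix.vecHead, Matrix.vecTail]
  ring

lemma trace_model' (A : RMat) :
    (transform A levyV_g).trace = A 0 0 ^ 2 + A 0 1 ^ 2 + A 0 2 ^ 2 := by
  simp [transform, Matrix.trace, Matrix.diag, Matrix.mul_apply, Fin.sum_univ_three,
    levyV_g, Matrix.transpose_apply, Matrix.vecHead, Matrix.vecTail]
  ring

lemma transform_linear' (A : RMat) (a b : ℝ) (M N : RMat) :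
    a • transform A M + b • transform A N = transform A (a • M + b • N) := by
  simp only [transform, Matrix.mul_add, Matrix.add_mul, Matrix.mul_smul, Matrix.smul_mul]

lemma transform_smul' (A : RMat) (r : ℝ) (M : RMat) :
    r • transform A M = transform A (r • M) := by
  simp only [transform, Matrix.mul_smul, Matrix.smul_mul]

lemma transform_sub' (A : RMat) (a b : ℝ) (M N : RMat) :
    a • transform A M - b • transform A N = transform A (a • M - b • N) := by
  simp only [transform, Matrix.mul_sub, Matrix.sub_mul, Matrix.mul_smul, Matrix.smul_mul]

end AuxOrbitV

set_option maxHeartbeats 2000000 in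
/-- **Proposition.** If `f, g` generate a pencil in orbit V, then `[f = 0]` lies inside
`[g = 0]` if and only if `T < 0`, where `T = Φ₁₂ tr M(f) − Φ₂₁ tr M(g)` is the trace of the
antisymmetric covariant `ℬ(f,g) = Φ₁₂ f − Φ₂₁ g`. -/
theorem which_inside_orbit_V (F G : RMat)
    (hF : F.IsSymm) (hG : G.IsSymm) (hdF : F.det ≠ 0) (hdG : G.det ≠ 0)
    (hneF : NonemptyConic F) (hneG : NonemptyConic G)
    (horb : PencilEquivTo F G levyV_f levyV_g) :
    InsideRel F G ↔ ph F G 1 * F.trace - ph F G 2 * G.trace < 0 := by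
  obtain ⟨A, hspan⟩ := horb
  set B : RMat := (↑A : RMat) with hBdef
  have hBu : IsUnit B.det := by
    rw [← Matrix.isUnit_iff_isUnit_det]; exact A.isUnit
  have hBdet : B.det ≠ 0 := hBu.ne_zero
  have hD : (0:ℝ) < B.det ^ 2 := pow_two_pos_of_ne_zero hBdet
  clear_value B
  -- extract coordinates
  have hFmem : F ∈ Submodule.span ℝ ({transform B levyV_f, transform B levyV_g} : Set RMat) := by
    rw [hspan]; exact Submodule.subset_span (by simp)
  have hGmem : G ∈ Submodule.span ℝ ({transform B levyV_f, transform B levyV_g} : Set RMat) := by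
    rw [hspan]; exact Submodule.subset_span (by simp)
  rw [Submodule.mem_span_pair] at hFmem hGmem
  obtain ⟨a, b, hab⟩ := hFmem
  obtain ⟨c, d, hcd⟩ := hGmem
  have hFt : F = transform B (a • levyV_f + b • levyV_g) := by
    rw [← hab, transform_linear']
  have hGt : G = transform B (c • levyV_f + d • levyV_g) := by
    rw [← hcd, transform_linear']
  have hFdet : F.det = B.det ^ 2 * (a ^ 3 / 4) := by
    rw [hFt, det_transform', det_model']
  have hGdet : G.det = B.det ^ 2 * (c ^ 3 / 4) := by
    rw [hGt, det_transform', det_model']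
  have ha : a ≠ 0 := by
    intro h; apply hdF; rw [hFdet, h]; ring
  have hc : c ≠ 0 := by
    intro h; apply hdG; rw [hGdet, h]; ring
  -- injectivity of transform
  have cancelB : ∀ X : RMat, (B⁻¹)ᵀ * (transform B X) * B⁻¹ = X := by
    intro X
    have h1 : B * B⁻¹ = 1 := Matrix.mul_nonsing_inv B hBu
    have h2 : (B⁻¹)ᵀ * Bᵀ = 1 := by rw [← Matrix.transpose_mul, h1, Matrix.transpose_one]
    rw [transform, Matrix.mul_assoc ((B⁻¹)ᵀ), Matrix.mul_assoc (Bᵀ * X), h1, Matrix.mul_one,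
      ← Matrix.mul_assoc, h2, Matrix.one_mul]
  -- a d - b c ≠ 0
  have hdet : a * d - b * c ≠ 0 := by
    intro h0
    have hinner : a • (c • levyV_f + d • levyV_g) = c • (a • levyV_f + b • levyV_g) := by
      ext i j
      simp only [Matrix.smul_apply, Matrix.add_apply, Pi.smul_apply, smul_eq_mul]
      linear_combination levyV_g i j * h0
    have hG' : a • G = c • F := by
      rw [hFt, hGt, transform_smul', transform_smul', hinner]
    have hGF : G = (c / a) • F := by
      have := congrArg (fun M : RMat => a⁻¹ • M) hG'
      simpa [smul_smul, inv_mul_cancel₀ ha, div_eq_inv_mul] using this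
    have hsub : ({F, G} : Set RMat) ⊆ (Submodule.span ℝ ({F} : Set RMat) : Set RMat) := by
      intro x hx
      rcases hx with h | h
      · exact h ▸ Submodule.subset_span rfl
      · simp only [Set.mem_singleton_iff] at h
        rw [h, hGF]
        exact Submodule.smul_mem _ _ (Submodule.subset_span rfl)
    have hspan2 : Submodule.span ℝ ({F, G} : Set RMat) ≤ Submodule.span ℝ ({F} : Set RMat) :=
      Submodule.span_le.2 hsub
    have hPmem : transform B levyV_f ∈ Submodule.span ℝ ({F} : Set RMat) := by
      apply hspan2; rw [← hspan]; exact Submodule.subset_span (by simp)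
    have hQmem : transform B levyV_g ∈ Submodule.span ℝ ({F} : Set RMat) := by
      apply hspan2; rw [← hspan]; exact Submodule.subset_span (by simp)
    rw [Submodule.mem_span_singleton] at hPmem hQmem
    obtain ⟨r, hr⟩ := hPmem
    obtain ⟨s, hs⟩ := hQmem
    have hsp : s • transform B levyV_f = r • transform B levyV_g := by
      rw [← hr, ← hs, smul_smul, smul_smul, mul_comm]
    have hsp2 : transform B (s • levyV_f) = transform B (r • levyV_g) := by
      rw [← transform_smul', ← transform_smul']
      exact hsp
    have hMN : s • levyV_f = r • levyV_g := by
      have := congrArg (fun M : RMat => (B⁻¹)ᵀ * M * B⁻¹) hsp2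
      simpa [cancelB] using this
    have hs0 : s = 0 := by
      have := congrFun (congrFun hMN 0) 2
      simp [levyV_f, levyV_g, Matrix.smul_apply] at this
      linarith
    have hr0 : r = 0 := by
      have := congrFun (congrFun hMN 0) 0
      simp [levyV_f, levyV_g, Matrix.smul_apply, hs0] at this
      linarith
    have hP0 : transform B levyV_f = 0 := by rw [← hr, hr0, zero_smul]
    have : (transform B levyV_f).det ≠ 0 := by
      rw [det_transform']
      have : levyV_f.det = 1/4 := by
        simp [Matrix.det_fin_three, levyV_f, Matrix.vecHead, Matrix.vecTail]
        norm_num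
      rw [this]
      positivity
    rw [hP0] at this
    simp at this
  -- coefficients of phi
  have hphi : phiP F G = C (B.det ^ 2) * (C (a*(a/2)^2) * X^3 + C (3*c*(a/2)^2) * X^2
      + C (3*a*(c/2)^2) * X + C (c*(c/2)^2)) := by
    rw [hFt, hGt, phiP_transform', phiP_model']
  have hph1 : ph F G 1 = B.det ^ 2 * (3*a*(c/2)^2) := by
    rw [ph, hphi]
    simp only [Polynomial.coeff_C_mul, Polynomial.coeff_add, Polynomial.coeff_X_pow,
      Polynomial.coeff_X, Polynomial.coeff_C]
    norm_num
  have hph2 : ph F G 2 = B.det ^ 2 * (3*c*(a/2)^2) := by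
    rw [ph, hphi]
    simp only [Polynomial.coeff_C_mul, Polynomial.coeff_add, Polynomial.coeff_X_pow,
      Polynomial.coeff_X, Polynomial.coeff_C]
    norm_num
  -- trace
  obtain ⟨τ, hτdef⟩ : ∃ τ : ℝ, τ = B 0 0 ^ 2 + B 0 1 ^ 2 + B 0 2 ^ 2 := ⟨_, rfl⟩
  have hτ : 0 < τ := by
    rw [hτdef]
    rcases lt_or_eq_of_le (by positivity : (0:ℝ) ≤ B 0 0 ^ 2 + B 0 1 ^ 2 + B 0 2 ^ 2) with h | h
    · exact h
    have h00 : B 0 0 = 0 := by nlinarith [sq_nonneg (B 0 0), sq_nonneg (B 0 1), sq_nonneg (B 0 2)]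
    have h01 : B 0 1 = 0 := by nlinarith [sq_nonneg (B 0 0), sq_nonneg (B 0 1), sq_nonneg (B 0 2)]
    have h02 : B 0 2 = 0 := by nlinarith [sq_nonneg (B 0 0), sq_nonneg (B 0 1), sq_nonneg (B 0 2)]
    exfalso
    apply hBdet
    rw [Matrix.det_fin_three, h00, h01, h02]
    ring
  have h5 : c * F.trace - a * G.trace = (c*b - a*d) * τ := by
    have hinner : c • (a • levyV_f + b • levyV_g) - a • (c • levyV_f + d • levyV_g)
        = (c*b - a*d) • levyV_g := by
      ext i j
      simp only [Matrix.sub_apply, Matrix.smul_apply, Matrix.add_apply, Pi.smul_apply,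
        smul_eq_mul]
      ring
    have hcomb : c • F - a • G = (c*b - a*d) • transform B levyV_g := by
      rw [hFt, hGt, transform_sub', hinner, ← transform_smul']
    have h6 : (c • F - a • G).trace = (c*b - a*d) * (transform B levyV_g).trace := by
      rw [hcomb, Matrix.trace_smul, smul_eq_mul]
    rw [Matrix.trace_sub, Matrix.trace_smul, Matrix.trace_smul, smul_eq_mul, smul_eq_mul] at h6
    rw [h6, trace_model', ← hτdef]
  have hT : ph F G 1 * F.trace - ph F G 2 * G.trace
      = B.det ^ 2 * (3*a*c/4) * ((c*b - a*d) * τ) := by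
    rw [hph1, hph2, ← h5]
    ring
  -- the sign quantity
  have hDτ : 0 < B.det ^ 2 * τ := mul_pos hD hτ
  have hsign : (ph F G 1 * F.trace - ph F G 2 * G.trace < 0) ↔ 0 < a * c * (a*d - b*c) := by
    rw [hT]
    have e : B.det ^ 2 * (3*a*c/4) * ((c*b - a*d) * τ)
        = -(3/4) * ((B.det ^ 2 * τ) * (a*c*(a*d - b*c))) := by ring
    rw [e]
    constructor
    · intro h
      by_contra hle
      push_neg at hle
      have h2 := mul_nonpos_of_nonneg_of_nonpos hDτ.le hle
      linarith
    · intro h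
      have h2 := mul_pos hDτ h
      linarith
  rw [hsign]
  -- InsideRel ↔ 0 < a c (ad - bc)
  constructor
  · -- InsideRel → sign
    intro hIns
    obtain ⟨w₀, hw₀def⟩ : ∃ w : Fin 3 → ℝ, w = ![1, 0, -b/a] := ⟨_, rfl⟩
    obtain ⟨v, hvdef⟩ : ∃ v : Fin 3 → ℝ, v = B⁻¹.mulVec w₀ := ⟨_, rfl⟩
    have hvB : B.mulVec v = w₀ := by
      rw [hvdef, Matrix.mulVec_mulVec, Matrix.mul_nonsing_inv B hBu, Matrix.one_mulVec]
    have hvne : v ≠ 0 := by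
      intro h0
      rw [h0, Matrix.mulVec_zero] at hvB
      have := congrFun hvB 0
      simp [hw₀def] at this
    obtain ⟨p, hpdef⟩ : ∃ p : RP2, p = Projectivization.mk ℝ v hvne := ⟨_, rfl⟩
    obtain ⟨u, hu⟩ : ∃ u : ℝˣ, u • v = p.rep := by
      rw [← Projectivization.mk_eq_mk_iff ℝ p.rep v p.rep_nonzero hvne, hpdef,
        Projectivization.mk_rep]
    have hqFv : qeval F v = 0 := by
      rw [hFt, qeval_transform', hvB, qeval_model']
      simp [hw₀def, Matrix.vecHead, Matrix.vecTail]
      field_simp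
      ring
    have hqGv : qeval G v = (a*d - c*b)/a := by
      rw [hGt, qeval_transform', hvB, qeval_model']
      simp [hw₀def, Matrix.vecHead, Matrix.vecTail]
      field_simp
      ring
    have hrepF : qeval F p.rep = 0 := by
      rw [← hu, Units.smul_def, qeval_smul', hqFv, mul_zero]
    have hrepG : qeval G p.rep = (u:ℝ)^2 * ((a*d - c*b)/a) := by
      rw [← hu, Units.smul_def, qeval_smul', hqGv]
    have hpF : p ∈ zeroLocus F := hrepF
    have hpG : p ∉ zeroLocus G := by
      intro h
      have h' : qeval G p.rep = 0 := h
      rw [hrepG] at h'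
      have hune : ((u:ℝ))^2 ≠ 0 := pow_ne_zero _ u.ne_zero
      have : (a*d - c*b)/a = 0 := by
        rcases mul_eq_zero.1 h' with h | h
        · exact absurd h hune
        · exact h
      rw [_root_.div_eq_zero_iff] at this
      rcases this with h | h
      · apply hdet; linarith [h]
      · exact absurd h ha
    have hins := hIns p hpF hpG
    have hq : 0 < qeval G p.rep * G.det := hins
    rw [hrepG, hGdet] at hq
    have heq : (u:ℝ)^2 * ((a*d - c*b)/a) * (B.det ^ 2 * (c^3/4))
        = (a * c * (a*d - b*c)) * (((u:ℝ) * c / a)^2 * B.det ^ 2) / 4 := by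
      field_simp
    rw [heq] at hq
    by_contra hle
    push_neg at hle
    have hpos : 0 < ((u:ℝ) * c / a)^2 * B.det ^ 2 :=
      mul_pos (pow_two_pos_of_ne_zero (div_ne_zero (mul_ne_zero u.ne_zero hc) ha)) hD
    nlinarith [mul_nonpos_of_nonpos_of_nonneg hle hpos.le]
  · -- sign → InsideRel
    intro hS p hpF hpG
    obtain ⟨w, hwdef⟩ : ∃ w : Fin 3 → ℝ, w = B.mulVec p.rep := ⟨_, rfl⟩
    have hF0 : b * w 0 ^ 2 + a * (w 0 * w 2 - w 1 ^ 2) = 0 := by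
      have h' : qeval F p.rep = 0 := hpF
      rw [hFt, qeval_transform', qeval_model'] at h'
      rw [hwdef]
      exact h'
    have hGq : qeval G p.rep = d * w 0 ^ 2 + c * (w 0 * w 2 - w 1 ^ 2) := by
      rw [hGt, qeval_transform', qeval_model', hwdef]
    have h7 : qeval G p.rep * a = (a*d - c*b) * w 0 ^ 2 := by
      rw [hGq]
      linear_combination c * hF0
    have hGne : qeval G p.rep ≠ 0 := fun h => hpG h
    have hw0 : w 0 ≠ 0 := by
      intro h0
      apply hGne
      have : qeval G p.rep * a = 0 := by rw [h7, h0]; ring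
      rcases mul_eq_zero.1 this with h | h
      · exact h
      · exact absurd h ha
    have h7' : qeval G p.rep = (a*d - c*b) * w 0 ^ 2 / a := by
      field_simp
      linarith [h7]
    show 0 < qeval G p.rep * G.det
    rw [h7', hGdet]
    have heq : (a*d - c*b) * w 0 ^ 2 / a * (B.det ^ 2 * (c^3/4))
        = (a * c * (a*d - b*c)) * ((w 0 * c / a)^2 * B.det ^ 2) / 4 := by
      field_simp
    rw [heq]
    have hpos : 0 < ((w 0) * c / a)^2 * B.det ^ 2 :=
      mul_pos (pow_two_pos_of_ne_zero (div_ne_zero (mul_ne_zero hw0 hc) ha)) hD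
    positivity
end
end
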